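/- Let u, v ∈ [0,1]. If either (u ≤ 1 and v ≤ 1) then q(u+v) + q(uv) ≤ q(u) + q(v), where q(x) = x(2−x) for x ≤ 1 and q(x) = 1 for x > 1. (The potential q is non-increasing under the extremal polarization combining step.) -/

import Mathlib

/-! Writing `q x = 1 - (1 - x)²` on `x ≤ 1`, the defect `1 - q` is `(1 - min x 1)²`. When
`u + v ≤ 1` the inequality is the identity `q (u + v) + q (u v) = q u + q v - (u v)²`. When
`u + v > 1`, put `a = 1 - u`, `b = 1 - v`; then `1 - u v = a + b - a b` and
`(a + b - a b)² - a² - b² = a b (2 - 2 (a + b) + a b) ≥ 0` because `a + b < 1`. -/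

noncomputable def q (x : ℝ) : ℝ := if x ≤ 1 then x * (2 - x) else 1

lemma q_of_le_one {x : ℝ} (hx : x ≤ 1) : q x = 1 - (1 - x) ^ 2 := by
  rw [q, if_pos hx]
  ring

lemma q_of_one_lt {x : ℝ} (hx : 1 < x) : q x = 1 :=
  if_neg hx.not_ge

lemma q_add_add_q_mul_of_add_le_one {u v : ℝ} (hu : 0 ≤ u) (hv : 0 ≤ v) (huv : u + v ≤ 1) :
    q (u + v) + q (u * v) = q u + q v - (u * v) ^ 2 := by
  have hu1 : u ≤ 1 := by linarith
  have hv1 : v ≤ 1 := by linarith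
  have hmul : u * v ≤ 1 := mul_le_one₀ hu1 hv hv1
  rw [q_of_le_one huv, q_of_le_one hmul, q_of_le_one hu1, q_of_le_one hv1]
  ring

lemma q_add_add_q_mul_le_of_one_lt_add {u v : ℝ} (hu : u ≤ 1) (hv : v ≤ 1) (huv : 1 < u + v) :
    q (u + v) + q (u * v) ≤ q u + q v := by
  obtain ⟨a, ha, rfl⟩ : ∃ a, 0 ≤ a ∧ u = 1 - a := ⟨1 - u, by linarith, by ring⟩
  obtain ⟨b, hb, rfl⟩ : ∃ b, 0 ≤ b ∧ v = 1 - b := ⟨1 - v, by linarith, by ring⟩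
  have hab : a + b < 1 := by linarith
  have hmul : (1 - a) * (1 - b) ≤ 1 := by nlinarith [mul_nonneg ha hb]
  have key : a ^ 2 + b ^ 2 ≤ (a + b - a * b) ^ 2 := by
    have : 0 ≤ a * b * (2 - 2 * (a + b) + a * b) :=
      mul_nonneg (mul_nonneg ha hb) (by nlinarith [mul_nonneg ha hb])
    nlinarith
  rw [q_of_one_lt huv, q_of_le_one hmul, q_of_le_one hu, q_of_le_one hv]
  nlinarith

theorem potential_nonincreasing (u v : ℝ) (hu : u ∈ Set.Icc (0:ℝ) 1)
    (hv : v ∈ Set.Icc (0:ℝ) 1) :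
    q (u + v) + q (u * v) ≤ q u + q v := by
  rcases le_or_gt (u + v) 1 with huv | huv
  · rw [q_add_add_q_mul_of_add_le_one hu.1 hv.1 huv]
    linarith [sq_nonneg (u * v)]
  · exact q_add_add_q_mul_le_of_one_lt_add hu.2 hv.2 huv
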